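/- Let K be a number field and let q ∈ K be a primitive root of unity of order κ ≥ 1. Let μ ≥ 1, let A(x) be a μ×μ matrix with entries in K(x) which is invertible over K(x), and set A_κ(x) = A(x)·A(qx)·⋯·A(q^{κ−1}x). Then there exists a μ×μ matrix F(x) with entries in K(x), invertible over K(x), such that F(x) = A(x)·F(qx) (i.e. the associated q-difference module is trivial over K(x)) if and only if |A_κ(x) − I_μ|_{v,Gauss} < 1 for infinitely many finite places v of K. -/

import Mathlib

/-!
If `F = A · F(qx)` with `F` invertible, iterating `κ` times gives
`F = A_κ · F(q^κ x) = A_κ · F`, so `A_κ = 1` and its reduction is trivial everywhere.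
Conversely, a nonzero matrix over `K(x)` has Gauss norm `1` at every place where the coefficients
of one of its nonzero entries are units, i.e. at all but finitely many places; so infinitely many
places with `|A_κ - 1| < 1` force `A_κ = 1`. Then `A` is a cocycle for the cyclic group of order
`κ` generated by `σ : x ↦ qx`, and Hilbert 90 splits it: by Artin's independence of the
characters `σ^m`, the vectors `∑_{m<κ} A_m σ^m(v)`, each a solution of `v = A σ(v)`, span
`K(x)^μ`, and a basis of them gives `F`.
-/

open NumberField IsDedekindDomain
open scoped Multiplicative Classical

noncomputable section

variable {K : Type*} [Field K]

/-- The substitution `x ↦ qx` on rational functions. -/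
def ratSubst (q : K) (f : RatFunc K) : RatFunc K :=
  algebraMap (Polynomial K) (RatFunc K) (f.num.comp (Polynomial.C q * Polynomial.X)) /
    algebraMap (Polynomial K) (RatFunc K) (f.denom.comp (Polynomial.C q * Polynomial.X))

/-- `A_m(x) = A(x) · A(qx) · ⋯ · A(q^{m-1} x)`. -/
def Aiter {μ : ℕ} (q : K) (A : Matrix (Fin μ) (Fin μ) (RatFunc K)) :
    ℕ → Matrix (Fin μ) (Fin μ) (RatFunc K)
  | 0 => 1
  | m + 1 => Aiter q A m * A.map (fun g => (ratSubst q)^[m] g)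

variable [NumberField K]

/-- The normalized `v`-adic absolute value on the number field `K`, with
`|p|_v = p^{-[K_v:ℚ_p]/[K:ℚ]}`. -/
def vAbs (v : IsDedekindDomain.HeightOneSpectrum (𝓞 K)) (x : K) : ℝ :=
  if h : x = 0 then 0
  else (Ideal.absNorm v.asIdeal : ℝ) ^
    (((Multiplicative.toAdd (WithZero.unzero ((v.valuation K).ne_zero_iff.mpr h)) : ℤ) : ℝ) /
      (Module.finrank ℚ K : ℝ))

/-- The `v`-adic Gauss norm of a polynomial: sup of the `v`-adic absolute values
of its coefficients. -/
def polyGaussNorm (v : IsDedekindDomain.HeightOneSpectrum (𝓞 K)) (P : Polynomial K) : ℝ :=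
  ⨆ i : ℕ, vAbs v (P.coeff i)

/-- The `v`-adic Gauss norm of a rational function. -/
def gaussNorm (v : IsDedekindDomain.HeightOneSpectrum (𝓞 K)) (f : RatFunc K) : ℝ :=
  polyGaussNorm v f.num / polyGaussNorm v f.denom

/-- The `v`-adic Gauss norm of a matrix of rational functions: the max of the Gauss norms
of its entries. -/
def matGaussNorm {μ : ℕ} (v : IsDedekindDomain.HeightOneSpectrum (𝓞 K))
    (M : Matrix (Fin μ) (Fin μ) (RatFunc K)) : ℝ :=
  ⨆ i, ⨆ j, gaussNorm v (M i j)

namespace Matrix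

open Finset

variable {n R : Type*} [Fintype n] [DecidableEq n]

section Semiring

variable [Semiring R] (σ : R →+* R) (A : Matrix n n R)

def twistedProd : ℕ → Matrix n n R
  | 0 => 1
  | m + 1 => twistedProd m * A.map ⇑(σ ^ m)

@[simp] lemma twistedProd_zero : twistedProd σ A 0 = 1 := rfl

lemma twistedProd_succ (m : ℕ) :
    twistedProd σ A (m + 1) = twistedProd σ A m * A.map ⇑(σ ^ m) := rfl

omit [Fintype n] [DecidableEq n] in
lemma map_map_pow (M : Matrix n n R) (m : ℕ) :
    (M.map ⇑(σ ^ m)).map σ = M.map ⇑(σ ^ (m + 1)) := by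
  rw [map_map, pow_succ', RingHom.coe_mul]

lemma twistedProd_succ' (m : ℕ) :
    twistedProd σ A (m + 1) = A * (twistedProd σ A m).map σ := by
  induction m with
  | zero => simp [twistedProd_succ]
  | succ m ih =>
    conv_lhs => rw [twistedProd_succ, ih]
    rw [twistedProd_succ σ A m, Matrix.map_mul, map_map_pow, mul_assoc]

lemma eq_twistedProd_mul_map_pow {F : Matrix n n R} (hF : F = A * F.map σ) (m : ℕ) :
    F = twistedProd σ A m * F.map ⇑(σ ^ m) := by
  induction m with
  | zero => simp
  | succ m ih =>
    conv_lhs => rw [ih, hF]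
    rw [Matrix.map_mul, map_map, ← RingHom.coe_mul, ← pow_succ, twistedProd_succ,
      mul_assoc]

lemma twistedProd_eq_one_of_isUnit {κ : ℕ} (hσ : σ ^ κ = 1) {F : Matrix n n R}
    (hFu : IsUnit F) (hF : F = A * F.map σ) : twistedProd σ A κ = 1 := by
  have h := eq_twistedProd_mul_map_pow σ A hF κ
  rw [hσ, RingHom.coe_one, Matrix.map_id] at h
  exact hFu.mul_right_cancel (by rw [one_mul, ← h])

def twistedTrace (κ : ℕ) (v : n → R) : n → R :=
  ∑ m ∈ range κ, twistedProd σ A m *ᵥ (⇑(σ ^ m) ∘ v)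

lemma mulVec_comp_twistedTrace {κ : ℕ} (hσ : σ ^ κ = 1) (hA : twistedProd σ A κ = 1)
    (v : n → R) : A *ᵥ (σ ∘ twistedTrace σ A κ v) = twistedTrace σ A κ v := by
  have hterm : ∀ m, A *ᵥ (σ ∘ (twistedProd σ A m *ᵥ (⇑(σ ^ m) ∘ v))) =
      twistedProd σ A (m + 1) *ᵥ (⇑(σ ^ (m + 1)) ∘ v) := by
    intro m
    have hcomp : σ ∘ (twistedProd σ A m *ᵥ (⇑(σ ^ m) ∘ v)) =
        (twistedProd σ A m).map σ *ᵥ (⇑(σ ^ (m + 1)) ∘ v) := by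
      ext i
      rw [Function.comp_apply, RingHom.map_mulVec, pow_succ', RingHom.coe_mul]
      rfl
    rw [hcomp, mulVec_mulVec, twistedProd_succ']
  have hσsum : σ ∘ twistedTrace σ A κ v =
      ∑ m ∈ range κ, σ ∘ (twistedProd σ A m *ᵥ (⇑(σ ^ m) ∘ v)) := by
    ext i
    simp [twistedTrace, Finset.sum_apply, map_sum]
  rw [hσsum, mulVec_sum, sum_congr rfl fun m _ => hterm m, twistedTrace]
  cases κ with
  | zero => simp
  | succ κ => rw [sum_range_succ, sum_range_succ' _ κ, hσ, hA]; simp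

end Semiring

section Field

variable {L : Type*} [Field L]

lemma linearIndependent_coe_pow {σ : L →+* L} :
    LinearIndependent L (fun m : Fin (orderOf σ) => ⇑(σ ^ (m : ℕ))) :=
  (linearIndependent_monoidHom L L).comp
    (fun m : Fin (orderOf σ) => RingHom.toMonoidHom (σ ^ (m : ℕ)))
    fun m m' h => Fin.ext <| pow_injOn_Iio_orderOf m.isLt m'.isLt <|
      RingHom.coe_monoidHom_injective (by exact h)

lemma span_range_twistedTrace {σ : L →+* L} (hσ : IsOfFinOrder σ) (A : Matrix n n L) :
    Submodule.span L (Set.range (twistedTrace σ A (orderOf σ))) = ⊤ := by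
  by_contra hspan
  obtain ⟨f, hf, hker⟩ := Submodule.exists_le_ker_of_lt_top _ (lt_top_iff_ne_top.2 hspan)
  refine hf (LinearMap.ext fun v => ?_)
  let g : Fin (orderOf σ) → L := fun m => f (twistedProd σ A m *ᵥ (⇑(σ ^ (m : ℕ)) ∘ v))
  -- Artin's independence of the characters `σ^m` kills every `g m`; `g 0 = f v`.
  have hg : ∑ m, g m • ⇑(σ ^ (m : ℕ)) = 0 := by
    ext c
    have h := hker (Submodule.subset_span ⟨c • v, rfl⟩)
    have hsmul (m : ℕ) : ⇑(σ ^ m) ∘ (c • v) = (σ ^ m) c • (⇑(σ ^ m) ∘ v) := by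
      ext
      simp
    simp only [LinearMap.mem_ker, twistedTrace, hsmul, mulVec_smul, map_sum, map_smul,
      smul_eq_mul] at h
    simp only [Finset.sum_apply, Pi.smul_apply, smul_eq_mul, Pi.zero_apply]
    rw [Fin.sum_univ_eq_sum_range
      (fun m => f (twistedProd σ A m *ᵥ (⇑(σ ^ m) ∘ v)) * (σ ^ m) c)]
    simpa only [mul_comm] using h
  simpa [g] using Fintype.linearIndependent_iff.1 (linearIndependent_coe_pow (σ := σ)) g hg
    ⟨0, hσ.orderOf_pos⟩

lemma exists_isUnit_col_mem_of_span_eq_top {S : Set (n → L)} (hS : Submodule.span L S = ⊤) :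
    ∃ F : Matrix n n L, IsUnit F ∧ ∀ j, F.col j ∈ S := by
  let b := Module.Basis.ofSpan hS.ge
  let b' := b.reindex (b.indexEquiv (Pi.basisFun L n))
  refine ⟨(Matrix.of b')ᵀ, linearIndependent_cols_iff_isUnit.1 b'.linearIndependent,
    fun j => Module.Basis.ofSpan_subset hS.ge ⟨_, (b.reindex_apply _ j).symm⟩⟩

theorem exists_isUnit_eq_mul_map_of_twistedProd_orderOf_eq_one {σ : L →+* L}
    (hσ : IsOfFinOrder σ) {A : Matrix n n L} (hA : twistedProd σ A (orderOf σ) = 1) :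
    ∃ F : Matrix n n L, IsUnit F ∧ F = A * F.map σ := by
  obtain ⟨F, hFu, hF⟩ := exists_isUnit_col_mem_of_span_eq_top (span_range_twistedTrace hσ A)
  refine ⟨F, hFu, ext fun i j => ?_⟩
  obtain ⟨v, hv⟩ := hF j
  have h := congrFun (mulVec_comp_twistedTrace σ A (pow_orderOf_eq_one σ) hA v) i
  rw [hv] at h
  exact h.symm

end Field

end Matrix

section Dilation

open Polynomial
open scoped nonZeroDivisors

variable {k : Type*} [Field k]

lemma Polynomial.comp_C_mul_X_comp_C_mul_X (P : k[X]) (a b : k) :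
    (P.comp (C a * X)).comp (C b * X) = P.comp (C (a * b) * X) := by
  rw [comp_assoc, mul_comp, C_comp, X_comp, C_mul, mul_assoc]

lemma Polynomial.compRingHom_C_mul_X_injective (u : kˣ) :
    Function.Injective (compRingHom (C (u : k) * X)) := by
  refine Function.LeftInverse.injective (g := compRingHom (C (↑u⁻¹ : k) * X)) fun P => ?_
  simp [coe_compRingHom_apply, comp_C_mul_X_comp_C_mul_X]

lemma Polynomial.nonZeroDivisors_le_comap_compRingHom (u : kˣ) :
    k[X]⁰ ≤ k[X]⁰.comap (compRingHom (C (u : k) * X)) :=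
  nonZeroDivisors_le_comap_nonZeroDivisors_of_injective _ (compRingHom_C_mul_X_injective u)

lemma RatFunc.map_algebraMap {R F : Type*} [CommRing R] [IsDomain R] [FunLike F k[X] R[X]]
    [MonoidWithZeroHomClass F k[X] R[X]] (φ : F) (hφ : k[X]⁰ ≤ R[X]⁰.comap φ) (P : k[X]) :
    RatFunc.map φ hφ (algebraMap _ _ P) = algebraMap _ _ (φ P) := by
  simpa using RatFunc.map_apply_div φ hφ P 1

noncomputable def dilation : kˣ →* (RatFunc k →+* RatFunc k) where
  toFun u :=
    RatFunc.mapRingHom (compRingHom (C (u : k) * X)) (nonZeroDivisors_le_comap_compRingHom u)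
  map_one' := by
    refine IsFractionRing.ringHom_ext (A := k[X]) fun P => ?_
    simp [RatFunc.coe_mapRingHom_eq_coe_map, RatFunc.map_algebraMap, coe_compRingHom_apply]
  map_mul' u v := by
    refine IsFractionRing.ringHom_ext (A := k[X]) fun P => ?_
    simp [RatFunc.coe_mapRingHom_eq_coe_map, RatFunc.map_algebraMap, coe_compRingHom_apply,
      comp_C_mul_X_comp_C_mul_X]
    rw [mul_comm (C (u : k))]

lemma dilation_algebraMap (u : kˣ) (P : k[X]) :
    dilation u (algebraMap _ _ P) = algebraMap _ _ (P.comp (C (u : k) * X)) :=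
  RatFunc.map_algebraMap _ (nonZeroDivisors_le_comap_compRingHom u) P

lemma coe_dilation (u : kˣ) : ⇑(dilation u) = ratSubst (u : k) := by
  ext f
  exact RatFunc.map_apply _ (nonZeroDivisors_le_comap_compRingHom u) f

lemma dilation_injective : Function.Injective (dilation (k := k)) := by
  intro u v huv
  have h := congrArg (fun σ : RatFunc k →+* RatFunc k => σ (algebraMap k[X] _ X)) huv
  simp only [dilation_algebraMap, X_comp, (IsFractionRing.injective k[X] (RatFunc k)).eq_iff] at h
  exact Units.ext (by simpa using congrArg (coeff · 1) h)

lemma Aiter_eq_twistedProd {μ : ℕ} (u : kˣ) (A : Matrix (Fin μ) (Fin μ) (RatFunc k))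
    (m : ℕ) : Aiter (u : k) A m = A.twistedProd (dilation u) m := by
  induction m with
  | zero => rfl
  | succ m ih => rw [Aiter, ih, Matrix.twistedProd_succ, RingHom.coe_pow, coe_dilation]

end Dilation

lemma IsDedekindDomain.HeightOneSpectrum.finite_setOf_valuation_ne_one {R L : Type*} [CommRing R]
    [IsDedekindDomain R] [Field L] [Algebra R L] [IsFractionRing R L] {a : L} (ha : a ≠ 0) :
    {v : HeightOneSpectrum R | v.valuation L a ≠ 1}.Finite := by
  refine ((Support.finite R a).union (Support.finite R a⁻¹)).subset fun v hv => ?_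
  rcases lt_or_gt_of_ne hv with h | h
  · right
    show 1 < v.valuation L a⁻¹
    rw [map_inv₀]
    exact one_lt_inv_iff₀.2 ⟨zero_lt_iff.2 ((v.valuation L).ne_zero_iff.2 ha), h⟩
  · exact Or.inl h

lemma vAbs_zero (v : HeightOneSpectrum (𝓞 K)) : vAbs v 0 = 0 := dif_pos rfl

lemma vAbs_eq_one {v : HeightOneSpectrum (𝓞 K)} {x : K} (hx : v.valuation K x = 1) :
    vAbs v x = 1 := by
  have hx0 : x ≠ 0 := by rintro rfl; simp at hx
  rw [vAbs, dif_neg hx0]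
  have : WithZero.unzero ((v.valuation K).ne_zero_iff.mpr hx0) = 1 := by
    rw [← WithZero.coe_inj, WithZero.coe_unzero, hx, WithZero.coe_one]
  simp [this]

instance : Infinite (HeightOneSpectrum ℤ) :=
  (Rat.HeightOneSpectrum.primesEquiv (R := ℤ)).infinite_iff.mpr inferInstance

lemma Algebra.IsIntegral.infinite_heightOneSpectrum {R A : Type*} [CommRing R] [CommRing A]
    [IsDomain A] [Algebra R A] [FaithfulSMul R A] [Algebra.IsIntegral R A]
    [Infinite (HeightOneSpectrum R)] : Infinite (HeightOneSpectrum A) := by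
  have := (FaithfulSMul.algebraMap_injective R A).isDomain
  refine Infinite.of_surjective (HeightOneSpectrum.under R) fun ⟨p, _, hp⟩ => ?_
  obtain ⟨P, hP, rfl⟩ := p.exists_ideal_over_prime_of_isIntegral_of_isDomain (S := A) (by simp)
  exact ⟨⟨P, hP, by aesop⟩, rfl⟩

instance : Infinite (HeightOneSpectrum (𝓞 K)) :=
  Algebra.IsIntegral.infinite_heightOneSpectrum (R := ℤ)

lemma polyGaussNorm_zero (v : HeightOneSpectrum (𝓞 K)) : polyGaussNorm v 0 = 0 := by
  simp [polyGaussNorm, vAbs_zero]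

lemma polyGaussNorm_eq_one {v : HeightOneSpectrum (𝓞 K)} {P : Polynomial K} (hP : P ≠ 0)
    (h : ∀ i ∈ P.support, v.valuation K (P.coeff i) = 1) : polyGaussNorm v P = 1 := by
  have hcoeff : ∀ i, P.coeff i ≠ 0 → vAbs v (P.coeff i) = 1 :=
    fun i hi => vAbs_eq_one (h i (Polynomial.mem_support_iff.2 hi))
  have hle : ∀ i, vAbs v (P.coeff i) ≤ 1 := fun i => by
    by_cases hi : P.coeff i = 0
    · simp [hi, vAbs_zero]
    · exact (hcoeff i hi).le
  refine le_antisymm (ciSup_le hle) ?_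
  rw [← hcoeff _ (mt Polynomial.leadingCoeff_eq_zero.1 hP)]
  exact le_ciSup ⟨1, Set.forall_mem_range.2 hle⟩ P.natDegree

lemma finite_setOf_polyGaussNorm_ne_one {P : Polynomial K} (hP : P ≠ 0) :
    {v : HeightOneSpectrum (𝓞 K) | polyGaussNorm v P ≠ 1}.Finite := by
  refine (P.support.finite_toSet.biUnion fun i hi =>
    HeightOneSpectrum.finite_setOf_valuation_ne_one (Polynomial.mem_support_iff.1 hi)).subset
    fun v hv => ?_
  contrapose! hv
  simpa using polyGaussNorm_eq_one hP (by simpa using hv)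

lemma gaussNorm_zero (v : HeightOneSpectrum (𝓞 K)) : gaussNorm v 0 = 0 := by
  simp [gaussNorm, polyGaussNorm_zero]

lemma finite_setOf_gaussNorm_ne_one {f : RatFunc K} (hf : f ≠ 0) :
    {v : HeightOneSpectrum (𝓞 K) | gaussNorm v f ≠ 1}.Finite := by
  refine ((finite_setOf_polyGaussNorm_ne_one (RatFunc.num_ne_zero hf)).union
    (finite_setOf_polyGaussNorm_ne_one (RatFunc.denom_ne_zero f))).subset fun v hv => ?_
  contrapose! hv
  simp_all [gaussNorm]

lemma matGaussNorm_zero {μ : ℕ} (v : HeightOneSpectrum (𝓞 K)) :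
    matGaussNorm v (0 : Matrix (Fin μ) (Fin μ) (RatFunc K)) = 0 := by
  simp [matGaussNorm, gaussNorm_zero]

lemma gaussNorm_le_matGaussNorm {μ : ℕ} (v : HeightOneSpectrum (𝓞 K))
    (M : Matrix (Fin μ) (Fin μ) (RatFunc K)) (i j : Fin μ) :
    gaussNorm v (M i j) ≤ matGaussNorm v M :=
  (le_ciSup (Set.finite_range _).bddAbove j).trans
    (le_ciSup (f := fun i => ⨆ j, gaussNorm v (M i j)) (Set.finite_range _).bddAbove i)

lemma finite_setOf_matGaussNorm_lt_one {μ : ℕ} {M : Matrix (Fin μ) (Fin μ) (RatFunc K)}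
    (hM : M ≠ 0) : {v : HeightOneSpectrum (𝓞 K) | matGaussNorm v M < 1}.Finite := by
  obtain ⟨i, j, hij⟩ : ∃ i j, M i j ≠ 0 := by
    by_contra! h
    exact hM (Matrix.ext h)
  refine (finite_setOf_gaussNorm_ne_one hij).subset fun v hv => ?_
  exact ((gaussNorm_le_matGaussNorm v M i j).trans_lt hv).ne

theorem q_root_of_unity_trivial_iff_trivial_reduction_infinitely_many_places_general
    {K : Type*} [Field K] [NumberField K]
    (q : K) (κ : ℕ) (hκpos : 0 < κ)
    (hqκ : q ^ κ = 1) (hqmin : ∀ m : ℕ, 0 < m → m < κ → q ^ m ≠ 1)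
    (μ : ℕ)
    (A : Matrix (Fin μ) (Fin μ) (RatFunc K)) :
    (∃ F : Matrix (Fin μ) (Fin μ) (RatFunc K),
        IsUnit F ∧ F = A * F.map (ratSubst q)) ↔
      {v : IsDedekindDomain.HeightOneSpectrum (𝓞 K) |
        matGaussNorm v (Aiter q A κ - 1) < 1}.Infinite := by
  have hq : IsPrimitiveRoot q κ := .mk_of_lt q hκpos hqκ hqmin
  obtain ⟨u, rfl⟩ := hq.isUnit hκpos.ne'
  have horder : orderOf (dilation u) = κ := by
    rw [orderOf_injective _ dilation_injective, ← orderOf_units, ← hq.eq_orderOf]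
  rw [Aiter_eq_twistedProd, ← horder, ← coe_dilation]
  constructor
  · rintro ⟨F, hFu, hF⟩
    rw [A.twistedProd_eq_one_of_isUnit _ (pow_orderOf_eq_one _) hFu hF, sub_self]
    simpa [matGaussNorm_zero] using Set.infinite_univ
  · intro hinf
    refine Matrix.exists_isUnit_eq_mul_map_of_twistedProd_orderOf_eq_one
      (orderOf_pos_iff.1 (horder ▸ hκpos)) ?_
    by_contra h
    exact hinf (finite_setOf_matGaussNorm_lt_one (sub_ne_zero.2 h))

/-- For `q` a primitive root of unity of order `κ` in a number field `K`, the
`q`-difference module with matrix `A` is trivial over `K(x)` if and only if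
`|A_κ(x) - 1|_{v,Gauss} < 1` for infinitely many finite places `v`. -/
theorem q_root_of_unity_trivial_iff_trivial_reduction_infinitely_many_places
    {K : Type*} [Field K] [NumberField K]
    (q : K) (κ : ℕ) (hκpos : 0 < κ)
    (hqκ : q ^ κ = 1) (hqmin : ∀ m : ℕ, 0 < m → m < κ → q ^ m ≠ 1)
    (μ : ℕ) (hμ : 1 ≤ μ)
    (A : Matrix (Fin μ) (Fin μ) (RatFunc K)) (hA : IsUnit A) :
    (∃ F : Matrix (Fin μ) (Fin μ) (RatFunc K),
        IsUnit F ∧ F = A * F.map (ratSubst q)) ↔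
      {v : IsDedekindDomain.HeightOneSpectrum (𝓞 K) |
        matGaussNorm v (Aiter q A κ - 1) < 1}.Infinite :=
  q_root_of_unity_trivial_iff_trivial_reduction_infinitely_many_places_general q κ hκpos hqκ hqmin μ
    A
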